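/- arXiv:1011.1966 — 5 statements merged into one kernel-verified Lean document; each statement's English description precedes it below -/
import Mathlib

section
/- For s ∈ (1/2, 1), A > 0, B ∈ ℝ, x₀ ∈ ℝ^N, the cusp function C(x) = A|x-x₀|^{2s-1} + B satisfies Δ^s_∞ C(x) = 0 for every x ≠ x₀; that is, writing v = (x-x₀)/|x-x₀| (the direction of ∇C(x)), the principal value integral ∫₀^∞ (C(x+ηv) + C(x-ηv) - 2C(x))/η^{1+2s} dη equals 0. -/
/-!
Along the gradient line the cusp is `A |r ± η|^p + B` with `r = ‖x - x₀‖` and `p = 2s - 1`, so the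
claim is `∫₀^∞ ((r + η)^p + |r - η|^p - 2 r^p) / η^(p+2) dη = 0`. This integrand has the explicit
primitive `Φ η = (2 r^(p+1) - (r + η)^(p+1) - (r - η) |r - η|^p) / ((p + 1) r η^(p+1))`, which tends
to `0` at both ends: as `η → 0⁺` because the numerator is a second difference of a function smooth
at `r`, hence `O(η²)`, and `p < 1`; as `η → ∞` because `(1 + r/η)^(p+1) - (1 - r/η)^(p+1) → 0`.
The same second-difference bound makes the integrand `O(η^(-p))` at `0`; it is `O(η^(-2))` at `∞`.
-/

open MeasureTheory Metric Set Real Filter Topology Asymptotics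
open scoped NNReal

noncomputable section

theorem abs_secondDiff_le_of_lipschitzOnWith {f f' : ℝ → ℝ} {a δ h : ℝ} {K : ℝ≥0}
    (hf : ∀ t ∈ Icc (a - δ) (a + δ), HasDerivAt f (f' t) t)
    (hf' : LipschitzOnWith K f' (Icc (a - δ) (a + δ))) (h0 : 0 ≤ h) (hδ : h ≤ δ) :
    |f (a + h) + f (a - h) - 2 * f a| ≤ 2 * K * h ^ 2 := by
  have hmem : ∀ t ∈ Icc 0 h, a + t ∈ Icc (a - δ) (a + δ) ∧ a - t ∈ Icc (a - δ) (a + δ) :=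
    fun t ⟨ht0, hth⟩ => ⟨⟨by linarith, by linarith⟩, ⟨by linarith, by linarith⟩⟩
  have hderiv : ∀ t ∈ Icc 0 h, HasDerivWithinAt (fun t => f (a + t) + f (a - t))
      (f' (a + t) - f' (a - t)) (Icc 0 h) t := by
    intro t ht
    have hplus := (hf _ (hmem t ht).1).comp t ((hasDerivAt_id t).const_add a)
    have hminus := (hf _ (hmem t ht).2).comp t ((hasDerivAt_id t).const_sub a)
    exact ((hplus.add hminus).congr_deriv (by ring)).hasDerivWithinAt
  have hbound : ∀ t ∈ Icc 0 h, ‖f' (a + t) - f' (a - t)‖ ≤ 2 * K * h := by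
    intro t ht
    calc ‖f' (a + t) - f' (a - t)‖ ≤ K * ‖(a + t) - (a - t)‖ :=
          hf'.norm_sub_le (hmem t ht).1 (hmem t ht).2
      _ = 2 * K * t := by rw [Real.norm_eq_abs, abs_of_nonneg (by linarith [ht.1])]; ring
      _ ≤ 2 * K * h := by gcongr; exact ht.2
  have hmvt := (convex_Icc 0 h).norm_image_sub_le_of_norm_hasDerivWithin_le hderiv hbound
    (left_mem_Icc.2 h0) (right_mem_Icc.2 h0)
  calc |f (a + h) + f (a - h) - 2 * f a|
      = ‖(f (a + h) + f (a - h)) - (f (a + 0) + f (a - 0))‖ := by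
        rw [add_zero, sub_zero, Real.norm_eq_abs]; ring_nf
    _ ≤ 2 * K * h * ‖h - 0‖ := hmvt
    _ = 2 * K * h ^ 2 := by rw [sub_zero, Real.norm_of_nonneg h0]; ring

theorem ContDiffAt.isBigO_secondDiff {f : ℝ → ℝ} {a : ℝ} (hf : ContDiffAt ℝ 2 f a) :
    (fun h => f (a + h) + f (a - h) - 2 * f a) =O[𝓝 0] fun h => h ^ 2 := by
  obtain ⟨K, t, ht, hK⟩ := (hf.derivWithin (m := 1) (by norm_num)).exists_lipschitzOnWith
  have hdiff : ∀ᶠ y in 𝓝 a, DifferentiableAt ℝ f y :=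
    (hf.eventually (by simp)).mono fun y hy => hy.differentiableAt (by norm_num)
  obtain ⟨δ, hδ, hball⟩ := Metric.mem_nhds_iff.1 (inter_mem ht hdiff)
  have hIcc : Icc (a - δ / 2) (a + δ / 2) ⊆ t ∩ {y | DifferentiableAt ℝ f y} := by
    rw [← Real.closedBall_eq_Icc]
    exact (closedBall_subset_ball (by linarith)).trans hball
  refine IsBigO.of_bound (2 * K) ?_
  filter_upwards [Metric.closedBall_mem_nhds (0 : ℝ) (half_pos hδ)] with h hh
  rw [mem_closedBall, dist_zero_right, Real.norm_eq_abs] at hh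
  have key := abs_secondDiff_le_of_lipschitzOnWith (f' := deriv f)
    (fun y hy => (hIcc hy).2.hasDerivAt) (hK.mono fun y hy => (hIcc hy).1) (abs_nonneg h) hh
  rw [Real.norm_eq_abs, norm_pow, Real.norm_eq_abs, sq_abs]
  rcases abs_choice h with habs | habs <;> rw [habs] at key
  · simpa using key
  · simpa [← sub_eq_add_neg, add_comm] using key

theorem isBigO_rpow_secondDiff_mul_inv_rpow {q r : ℝ} (hr : 0 < r) (c : ℝ) :
    (fun η => ((r + η) ^ q + (r - η) ^ q - 2 * r ^ q) * (η ^ c)⁻¹) =O[𝓝[>] 0]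
      fun η => η ^ (2 - c) := by
  have hD := (contDiffAt_rpow_const_of_ne (p := q) (n := 2) hr.ne').isBigO_secondDiff
  refine ((hD.mono nhdsWithin_le_nhds).mul (isBigO_refl _ _)).trans_eventuallyEq ?_
  filter_upwards [self_mem_nhdsWithin] with η hη
  rw [rpow_sub hη, rpow_two, div_eq_mul_inv]

theorem integrableOn_Ioi_of_isBigO {f g₀ g₁ : ℝ → ℝ} {a : ℝ} (hf : ContinuousOn f (Ioi a))
    (h₀ : f =O[𝓝[>] a] g₀) (hg₀ : IntegrableAtFilter g₀ (𝓝[>] a))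
    (h₁ : f =O[atTop] g₁) (hg₁ : IntegrableAtFilter g₁ atTop) : IntegrableOn f (Ioi a) := by
  obtain ⟨s, hs, hfs⟩ :=
    h₀.integrableAtFilter (hf.stronglyMeasurableAtFilter_nhdsWithin measurableSet_Ioi a) hg₀
  obtain ⟨b, hab, hb⟩ := mem_nhdsGT_iff_exists_Ioc_subset.1 hs
  have hright : IntegrableOn f (Ici b) :=
    ((hf.mono fun x hx => lt_of_lt_of_le hab hx).locallyIntegrableOn
      measurableSet_Ici).integrableOn_of_isBigO_atTop h₁ hg₁
  rw [← Ioc_union_Ioi_eq_Ioi (le_of_lt hab)]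
  exact (hfs.mono_set hb).union (hright.mono_set Ioi_subset_Ici_self)

theorem integral_Ioi_of_hasDerivAt_of_tendsto_nhdsGT {f f' : ℝ → ℝ} {a l m : ℝ}
    (hl : Tendsto f (𝓝[>] a) (𝓝 l)) (hderiv : ∀ x ∈ Ioi a, HasDerivAt f (f' x) x)
    (hint : IntegrableOn f' (Ioi a)) (hm : Tendsto f atTop (𝓝 m)) :
    ∫ x in Ioi a, f' x = m - l := by
  classical
  have heq : ∀ x ∈ Ioi a, Function.update f a l =ᶠ[𝓝 x] f := fun x hx =>
    (eventually_ne_nhds (ne_of_gt hx)).mono fun y hy => Function.update_of_ne hy _ _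
  have h := integral_Ioi_of_hasDerivAt_of_tendsto (f := Function.update f a l)
    (continuousWithinAt_update_same.2 (by rwa [Ici_sdiff_left]))
    (fun x hx => (hderiv x hx).congr_of_eventuallyEq (heq x hx)) hint
    (hm.congr' ((eventually_gt_atTop a).mono fun x hx => ((heq x hx).eq_of_nhds).symm))
  rwa [Function.update_self] at h

theorem hasDerivAt_mul_abs_rpow {p : ℝ} (hp : 0 < p) (t : ℝ) :
    HasDerivAt (fun t => t * |t| ^ p) ((p + 1) * |t| ^ p) t := by
  refine hasDerivAt_of_hasDerivAt_of_ne' (x := 0) (fun y hy => ?_)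
    (continuous_id.mul (continuous_abs.rpow_const fun _ => Or.inr hp.le)).continuousAt
    ((continuous_abs.rpow_const fun _ => Or.inr hp.le).const_mul _).continuousAt t
  have habs : |y| ≠ 0 := abs_ne_zero.2 hy
  refine ((hasDerivAt_id y).mul ((hasDerivAt_abs hy).rpow_const (Or.inl habs))).congr_deriv ?_
  rw [rpow_sub_one habs, id, ← mul_assoc, ← mul_assoc, self_mul_sign]
  field_simp
  ring

def cuspKernel (p r η : ℝ) : ℝ := ((r + η) ^ p + |r - η| ^ p - 2 * r ^ p) / η ^ (p + 2)

def cuspPrimitive (p r η : ℝ) : ℝ :=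
  (2 * r ^ (p + 1) - (r + η) ^ (p + 1) - (r - η) * |r - η| ^ p) / ((p + 1) * r * η ^ (p + 1))

theorem hasDerivAt_cuspPrimitive {p r η : ℝ} (hp : 0 < p) (hr : 0 < r) (hη : 0 < η) :
    HasDerivAt (cuspPrimitive p r) (cuspKernel p r η) η := by
  have hrη : 0 < r + η := by linarith
  have hplus : HasDerivAt (fun η => (r + η) ^ (p + 1)) ((p + 1) * (r + η) ^ p) η := by
    simpa using ((hasDerivAt_id η).const_add r).rpow_const (p := p + 1) (Or.inl hrη.ne')
  have hminus : HasDerivAt (fun η => (r - η) * |r - η| ^ p) (-((p + 1) * |r - η| ^ p)) η :=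
    ((hasDerivAt_mul_abs_rpow hp (r - η)).comp η
      ((hasDerivAt_id η).const_sub r)).congr_deriv (by ring)
  have hden : HasDerivAt (fun η => (p + 1) * r * η ^ (p + 1))
      ((p + 1) * r * ((p + 1) * η ^ p)) η := by
    simpa using
      ((hasDerivAt_id η).rpow_const (p := p + 1) (Or.inl hη.ne')).const_mul ((p + 1) * r)
  refine (((hplus.const_sub _).sub hminus).div hden (by positivity)).congr_deriv ?_
  simp only [Pi.sub_apply, cuspKernel]
  rw [rpow_add hrη, rpow_add hr, rpow_add hη, rpow_add hη, rpow_one, rpow_one, rpow_one,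
    rpow_two]
  field_simp
  ring

theorem tendsto_cuspPrimitive_nhdsGT {p r : ℝ} (hp1 : p < 1) (hr : 0 < r) :
    Tendsto (cuspPrimitive p r) (𝓝[>] 0) (𝓝 0) := by
  have heq : cuspPrimitive p r =ᶠ[𝓝[>] 0] fun η => -((p + 1) * r)⁻¹ *
      (((r + η) ^ (p + 1) + (r - η) ^ (p + 1) - 2 * r ^ (p + 1)) * (η ^ (p + 1))⁻¹) := by
    filter_upwards [Ioo_mem_nhdsGT hr] with η ⟨hη, hηr⟩
    rw [cuspPrimitive, abs_of_pos (sub_pos.2 hηr), rpow_add_one (sub_pos.2 hηr).ne']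
    field_simp
    ring
  have hpow : Tendsto (fun η : ℝ => η ^ (2 - (p + 1))) (𝓝[>] 0) (𝓝 0) := by
    have h := (continuousAt_rpow_const 0 (2 - (p + 1)) (Or.inr (by linarith))).tendsto
    rw [zero_rpow (by linarith)] at h
    exact h.mono_left nhdsWithin_le_nhds
  exact (heq.trans_isBigO
    ((isBigO_rpow_secondDiff_mul_inv_rpow hr (p + 1)).const_mul_left _)).trans_tendsto hpow

theorem tendsto_cuspPrimitive_atTop {p r : ℝ} (hp : -1 < p) (hr : 0 < r) :
    Tendsto (cuspPrimitive p r) atTop (𝓝 0) := by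
  have hcont : Tendsto (fun u : ℝ => (2 * u ^ (p + 1) - (1 + u) ^ (p + 1) + (1 - u) ^ (p + 1)) /
      ((p + 1) * r)) (𝓝 0) (𝓝 0) := by
    have hrpow : Continuous fun u : ℝ => u ^ (p + 1) := continuous_rpow_const (by linarith)
    have h : Continuous fun u : ℝ => (2 * u ^ (p + 1) - (1 + u) ^ (p + 1) + (1 - u) ^ (p + 1)) /
        ((p + 1) * r) := by fun_prop
    simpa [zero_rpow (by linarith : p + 1 ≠ 0)] using h.tendsto 0
  refine (hcont.comp ((tendsto_const_nhds (x := r)).div_atTop tendsto_id)).congr' ?_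
  filter_upwards [eventually_gt_atTop r] with η hη
  have hη0 : 0 < η := hr.trans hη
  rw [Function.comp_apply, id, cuspPrimitive, abs_sub_comm, abs_of_pos (sub_pos.2 hη),
    show (1 : ℝ) + r / η = (r + η) / η by field_simp; ring,
    show (1 : ℝ) - r / η = (η - r) / η by field_simp,
    div_rpow hr.le hη0.le, div_rpow (by linarith) hη0.le, div_rpow (by linarith) hη0.le,
    rpow_add_one (sub_pos.2 hη).ne']
  have : η ^ (p + 1) ≠ 0 := by positivity
  field_simp
  ring

theorem isBigO_cuspKernel_atTop {p r : ℝ} (hp : 0 ≤ p) :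
    cuspKernel p r =O[atTop] fun η => η ^ (-2 : ℝ) := by
  have hid : ∀ᶠ η : ℝ in atTop, 0 ≤ id η := eventually_ge_atTop 0
  have hplus : (fun η => (r + η) ^ p) =O[atTop] fun η => id η ^ p :=
    ((isLittleO_const_id_atTop r).isBigO.add (isBigO_refl _ _)).rpow hp hid
  have hminus : (fun η => |r - η| ^ p) =O[atTop] fun η => id η ^ p :=
    (isBigO_abs_left.2 ((isLittleO_const_id_atTop r).isBigO.sub (isBigO_refl _ _))).rpow hp hid
  have hconst : (fun _ => 2 * r ^ p) =O[atTop] fun η : ℝ => id η ^ p := by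
    refine IsBigO.of_bound ‖2 * r ^ p‖ ?_
    filter_upwards [eventually_ge_atTop 1] with η hη
    refine le_mul_of_one_le_right (norm_nonneg _) ?_
    rw [id, Real.norm_of_nonneg (rpow_nonneg (zero_le_one.trans hη) _)]
    exact one_le_rpow hη hp
  refine (((hplus.add hminus).sub hconst).mul
    (isBigO_refl (fun η => (η ^ (p + 2))⁻¹) _)).congr' ?_ ?_
  · exact Eventually.of_forall fun η => div_eq_mul_inv _ _
  · filter_upwards [eventually_gt_atTop 0] with η hη
    have : η ^ p ≠ 0 := (rpow_pos_of_pos hη p).ne'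
    rw [id, rpow_add hη, rpow_two, mul_inv, ← mul_assoc, mul_inv_cancel₀ this, one_mul,
      rpow_neg hη.le, rpow_two]

theorem integrableOn_cuspKernel {p r : ℝ} (hp : 0 < p) (hp1 : p < 1) (hr : 0 < r) :
    IntegrableOn (cuspKernel p r) (Ioi 0) := by
  have hcont : ContinuousOn (cuspKernel p r) (Ioi 0) := fun η hη =>
    ((((continuous_const.add continuous_id).rpow_const fun _ => Or.inr hp.le).add
      ((continuous_const.sub continuous_id).abs.rpow_const fun _ => Or.inr hp.le)).sub
      continuous_const).continuousAt.div
      (continuousAt_rpow_const _ _ (Or.inl (ne_of_gt hη))) (rpow_pos_of_pos hη _).ne'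
      |>.continuousWithinAt
  have hnear : cuspKernel p r =O[𝓝[>] 0] fun η => η ^ (2 - (p + 2)) := by
    refine EventuallyEq.trans_isBigO ?_ (isBigO_rpow_secondDiff_mul_inv_rpow (q := p) hr (p + 2))
    filter_upwards [Ioo_mem_nhdsGT hr] with η ⟨_, hηr⟩
    rw [cuspKernel, abs_of_pos (sub_pos.2 hηr), div_eq_mul_inv]
  refine integrableOn_Ioi_of_isBigO hcont hnear ⟨Ioo 0 1, Ioo_mem_nhdsGT one_pos, ?_⟩
    (isBigO_cuspKernel_atTop hp.le) ⟨Ioi 1, Ioi_mem_atTop 1, ?_⟩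
  · exact (intervalIntegral.integrableOn_Ioo_rpow_iff one_pos).2 (by linarith)
  · exact integrableOn_Ioi_rpow_of_lt (by norm_num) one_pos

theorem integral_cuspKernel {p r : ℝ} (hp : 0 < p) (hp1 : p < 1) (hr : 0 < r) :
    ∫ η in Ioi 0, cuspKernel p r η = 0 := by
  simpa using integral_Ioi_of_hasDerivAt_of_tendsto_nhdsGT (tendsto_cuspPrimitive_nhdsGT hp1 hr)
    (fun η hη => hasDerivAt_cuspPrimitive hp hr hη) (integrableOn_cuspKernel hp hp1 hr)
    (tendsto_cuspPrimitive_atTop (by linarith) hr)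

theorem norm_add_smul_inv_norm_smul {E : Type*} [NormedAddCommGroup E] [NormedSpace ℝ E] {u : E}
    (hu : u ≠ 0) (c : ℝ) : ‖u + c • (‖u‖⁻¹ • u)‖ = |‖u‖ + c| := by
  have hu' : ‖u‖ ≠ 0 := norm_ne_zero_iff.2 hu
  rw [show u + c • (‖u‖⁻¹ • u) = ((‖u‖ + c) * ‖u‖⁻¹) • u by
    rw [smul_smul, add_mul, mul_inv_cancel₀ hu', add_smul, one_smul]]
  rw [norm_smul, norm_mul, norm_inv, norm_norm, norm_eq_abs, inv_mul_cancel_right₀ hu']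

theorem stmt_3_general {N : ℕ} (s : ℝ) (hs : 1 / 2 < s) (hs1 : s < 1)
    (A B : ℝ) (x₀ x : EuclideanSpace ℝ (Fin N)) (hx : x ≠ x₀) :
    (∫ η in Set.Ioi (0 : ℝ),
      ((fun z => A * ‖z - x₀‖ ^ (2 * s - 1) + B) (x + η • (‖x - x₀‖⁻¹ • (x - x₀)))
        + (fun z => A * ‖z - x₀‖ ^ (2 * s - 1) + B) (x - η • (‖x - x₀‖⁻¹ • (x - x₀)))
        - 2 * ((fun z => A * ‖z - x₀‖ ^ (2 * s - 1) + B) x)) / η ^ (1 + 2 * s)) = 0 := by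
  have hu : x - x₀ ≠ 0 := sub_ne_zero.2 hx
  have hr : 0 < ‖x - x₀‖ := norm_pos_iff.2 hu
  have hline : ∀ c : ℝ, ‖x + c • (‖x - x₀‖⁻¹ • (x - x₀)) - x₀‖ = |‖x - x₀‖ + c| := fun c => by
    rw [add_sub_right_comm, norm_add_smul_inv_norm_smul hu]
  calc _ = ∫ η in Ioi 0, A * cuspKernel (2 * s - 1) ‖x - x₀‖ η :=
        setIntegral_congr_fun measurableSet_Ioi fun η hη => ?_
    _ = 0 := by
      rw [integral_const_mul, integral_cuspKernel (by linarith) (by linarith) hr, mul_zero]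
  have hminus : ‖x - η • (‖x - x₀‖⁻¹ • (x - x₀)) - x₀‖ = |‖x - x₀‖ - η| := by
    rw [sub_eq_add_neg x, ← neg_smul, hline, ← sub_eq_add_neg]
  simp only [hline, hminus, cuspKernel, abs_of_pos (add_pos hr hη),
    show 1 + 2 * s = 2 * s - 1 + 2 by ring]
  ring

/-- the cusp `C(x) = A|x-x₀|^{2s-1} + B` satisfies `Δ^s_∞ C(x) = 0`
for every `x ≠ x₀`, i.e. the second-difference integral in the direction of the
gradient `v = (x - x₀)/|x - x₀|` vanishes. -/
theorem stmt_3 {N : ℕ} (s : ℝ) (hs : 1 / 2 < s) (hs1 : s < 1)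
    (A B : ℝ) (hA : 0 < A) (x₀ x : EuclideanSpace ℝ (Fin N)) (hx : x ≠ x₀) :
    (∫ η in Set.Ioi (0 : ℝ),
      ((fun z => A * ‖z - x₀‖ ^ (2 * s - 1) + B) (x + η • (‖x - x₀‖⁻¹ • (x - x₀)))
        + (fun z => A * ‖z - x₀‖ ^ (2 * s - 1) + B) (x - η • (‖x - x₀‖⁻¹ • (x - x₀)))
        - 2 * ((fun z => A * ‖z - x₀‖ ^ (2 * s - 1) + B) x)) / η ^ (1 + 2 * s)) = 0 :=
  stmt_3_general s hs hs1 A B x₀ x hx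
end
end

section
/- For s ∈ (1/2, 1), the one-dimensional function g(η) = (max(η,0))^s satisfies the s-fractional harmonic equation on the positive half-line: for every t > 0, the principal value integral ∫_{-∞}^∞ (g(t+τ) - g(t))/|τ|^{1+2s} dτ = 0. -/
/-!
Split the principal value integral into `τ > ε` and `τ = -u < -ε`. For `u > t` the integrand is
`-t^s u^(-1-2s)`, contributing `-1/(2 s t^s)`. On `ε < u < t` substitute `u = tτ/(t+τ)`: the
transformed negative part `pullback` and the positive part add up to the derivative of the explicit
`kernelPrimitive τ = ((t+τ)^s - t^s)² / (2 s t^s τ^(2s))`, which tends to `1/(2 s t^s)` at infinity.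
The constants cancel, leaving `-kernelPrimitive ε = O(ε^(2-2s))` minus the integral of `pullback`
over `(ε, tε/(t-ε)]`, an interval of length `O(ε²)` on which `pullback = O(ε^(-1-s))`.
-/

open MeasureTheory Set Real Filter Topology

noncomputable section

theorem setIntegral_lt_abs {E : Type*} [NormedAddCommGroup E] [NormedSpace ℝ E] {f : ℝ → E}
    {ε : ℝ} (hε : 0 ≤ ε) (hpos : IntegrableOn f (Ioi ε))
    (hneg : IntegrableOn (fun x => f (-x)) (Ioi ε)) :
    ∫ x in {x | ε < |x|}, f x = (∫ x in Ioi ε, f x) + ∫ x in Ioi ε, f (-x) := by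
  have hset : {x : ℝ | ε < |x|} = Iio (-ε) ∪ Ioi ε := by
    ext x
    simp only [mem_ofPred_eq, lt_abs, mem_union, mem_Iio, mem_Ioi, lt_neg, or_comm]
  have hIio : IntegrableOn f (Iio (-ε)) := by
    rw [← (Measure.measurePreserving_neg volume).integrableOn_comp_preimage
      (Homeomorph.neg ℝ).measurableEmbedding]
    simpa [Function.comp_def] using hneg
  rw [hset, setIntegral_union
      ((Iio_disjoint_Ici (by linarith)).mono_right Ioi_subset_Ici_self) measurableSet_Ioi hIio hpos,
    add_comm, integral_comp_neg_Ioi, integral_Iic_eq_integral_Iio]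

theorem integrableOn_Ioi_of_norm_le_rpow {E : Type*} [NormedAddCommGroup E] {f : ℝ → E}
    {p ε : ℝ} (hp : p < -1) (hε : 0 < ε) (hf : AEStronglyMeasurable f (volume.restrict (Ioi ε)))
    (hbound : ∀ x ∈ Ioi ε, ‖f x‖ ≤ x ^ p) : IntegrableOn f (Ioi ε) :=
  (integrableOn_Ioi_rpow_of_lt hp hε).mono' hf
    ((ae_restrict_iff' measurableSet_Ioi).2 (Eventually.of_forall hbound))

theorem abs_rpow_sub_rpow_le {x y p : ℝ} (hx : 0 ≤ x) (hy : 0 ≤ y) (hp0 : 0 ≤ p) (hp1 : p ≤ 1) :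
    |x ^ p - y ^ p| ≤ |x - y| ^ p := by
  wlog hxy : y ≤ x generalizing x y
  · rw [abs_sub_comm, abs_sub_comm x]
    exact this hy hx (le_of_not_ge hxy)
  have hsub := rpow_add_le_add_rpow (sub_nonneg.2 hxy) hy hp0 hp1
  rw [sub_add_cancel] at hsub
  rw [abs_of_nonneg (sub_nonneg.2 (rpow_le_rpow hy hxy hp0)), abs_of_nonneg (sub_nonneg.2 hxy)]
  linarith

theorem tendsto_rpow_nhdsGT_zero {p : ℝ} (hp : 0 < p) :
    Tendsto (fun x : ℝ => x ^ p) (𝓝[>] 0) (𝓝 0) := by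
  simpa [zero_rpow hp.ne'] using
    (continuousAt_rpow_const 0 p (Or.inr hp.le)).tendsto.mono_left nhdsWithin_le_nhds

theorem rpow_one_add_two_mul {x : ℝ} (hx : 0 < x) (s : ℝ) : x ^ (1 + 2 * s) = x * (x ^ s) ^ 2 := by
  rw [rpow_add hx, rpow_one, mul_comm 2 s, rpow_mul hx.le, rpow_two]

namespace FracHarmonic

def posRpow (s η : ℝ) : ℝ := if 0 ≤ η then η ^ s else 0

def fracKernel (s t τ : ℝ) : ℝ := (posRpow s (t + τ) - posRpow s t) / |τ| ^ (1 + 2 * s)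

variable {s t ε τ : ℝ}

@[fun_prop]
theorem measurable_posRpow : Measurable (posRpow s) :=
  Measurable.ite measurableSet_Ici (by fun_prop) measurable_const

theorem posRpow_eq_max_rpow (hs : 0 < s) (η : ℝ) : posRpow s η = max η 0 ^ s := by
  unfold posRpow
  split_ifs with h
  · rw [max_eq_left h]
  · rw [max_eq_right (not_le.1 h).le, zero_rpow hs.ne']

theorem abs_posRpow_sub_posRpow_le (hs0 : 0 < s) (hs1 : s ≤ 1) (a b : ℝ) :
    |posRpow s a - posRpow s b| ≤ |a - b| ^ s := by
  rw [posRpow_eq_max_rpow hs0, posRpow_eq_max_rpow hs0]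
  exact (abs_rpow_sub_rpow_le (le_max_right _ _) (le_max_right _ _) hs0.le hs1).trans
    (rpow_le_rpow (abs_nonneg _) (abs_max_sub_max_le_abs a b 0) hs0.le)

theorem abs_fracKernel_le (hs0 : 0 < s) (hs1 : s ≤ 1) (t τ : ℝ) :
    |fracKernel s t τ| ≤ |τ| ^ (-(1 + s)) := by
  rcases eq_or_ne τ 0 with rfl | hτ
  · simp only [fracKernel, add_zero, sub_self, zero_div, abs_zero]
    exact rpow_nonneg le_rfl _
  have hτ' : 0 < |τ| := abs_pos.2 hτ
  rw [fracKernel, abs_div, abs_of_pos (rpow_pos_of_pos hτ' _), div_le_iff₀ (by positivity),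
    ← rpow_add hτ']
  calc |posRpow s (t + τ) - posRpow s t| ≤ |t + τ - t| ^ s :=
        abs_posRpow_sub_posRpow_le hs0 hs1 _ _
    _ = |τ| ^ (-(1 + s) + (1 + 2 * s)) := by ring_nf

@[fun_prop]
theorem measurable_fracKernel : Measurable (fracKernel s t) := by
  unfold fracKernel
  fun_prop

theorem integrableOn_fracKernel (hs0 : 0 < s) (hs1 : s ≤ 1) (hε : 0 < ε) :
    IntegrableOn (fracKernel s t) (Ioi ε) := by
  refine integrableOn_Ioi_of_norm_le_rpow (p := -(1 + s)) (by linarith) hε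
    (by fun_prop) fun τ hτ => ?_
  simpa [abs_of_pos (hε.trans hτ)] using abs_fracKernel_le hs0 hs1 t τ

theorem integrableOn_fracKernel_comp_neg (hs0 : 0 < s) (hs1 : s ≤ 1) (hε : 0 < ε) :
    IntegrableOn (fun u => fracKernel s t (-u)) (Ioi ε) := by
  refine integrableOn_Ioi_of_norm_le_rpow (p := -(1 + s)) (by linarith) hε
    (measurable_fracKernel.comp measurable_neg).aestronglyMeasurable fun u hu => ?_
  simpa [abs_of_pos (hε.trans hu)] using abs_fracKernel_le hs0 hs1 t (-u)

theorem setIntegral_fracKernel (hs0 : 0 < s) (hs1 : s ≤ 1) (hε : 0 < ε) :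
    ∫ τ in {τ | ε < |τ|}, fracKernel s t τ
      = (∫ τ in Ioi ε, fracKernel s t τ) + ∫ u in Ioi ε, fracKernel s t (-u) :=
  setIntegral_lt_abs hε.le (integrableOn_fracKernel hs0 hs1 hε)
    (integrableOn_fracKernel_comp_neg hs0 hs1 hε)

theorem fracKernel_of_pos (ht : 0 ≤ t) (hτ : 0 < τ) :
    fracKernel s t τ = ((t + τ) ^ s - t ^ s) / τ ^ (1 + 2 * s) := by
  rw [fracKernel, posRpow, posRpow, if_pos (by linarith), if_pos ht, abs_of_pos hτ]

theorem fracKernel_neg_of_le {u : ℝ} (hu : 0 < u) (hut : u ≤ t) :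
    fracKernel s t (-u) = ((t - u) ^ s - t ^ s) / u ^ (1 + 2 * s) := by
  rw [fracKernel, posRpow, posRpow, if_pos (by linarith), if_pos (by linarith), abs_neg,
    abs_of_pos hu, ← sub_eq_add_neg]

theorem fracKernel_neg_of_lt {u : ℝ} (ht : 0 ≤ t) (htu : t < u) :
    fracKernel s t (-u) = -t ^ s * u ^ (-(1 + 2 * s)) := by
  rw [fracKernel, posRpow, posRpow, if_neg (by linarith), if_pos ht, abs_neg,
    abs_of_pos (ht.trans_lt htu), rpow_neg (ht.trans htu.le), zero_sub, div_eq_mul_inv]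

theorem integral_fracKernel_neg_Ioi_self (hs : 0 < s) (ht : 0 < t) :
    ∫ u in Ioi t, fracKernel s t (-u) = -(2 * s * t ^ s)⁻¹ := by
  rw [setIntegral_congr_fun measurableSet_Ioi fun u hu => fracKernel_neg_of_lt ht.le hu,
    integral_const_mul, integral_Ioi_rpow_of_lt (by linarith) ht,
    show -(1 + 2 * s) + 1 = -(2 * s) by ring, rpow_neg ht.le, mul_comm 2 s, rpow_mul ht.le,
    rpow_two]
  have : t ^ s ≠ 0 := by positivity
  field_simp

/-- `t - kelvin t τ = t ^ 2 / (t + τ)`: the substitution `u = kelvin t τ` is the inversion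
`η ↦ t ^ 2 / η`, which exchanges the points `t - u ∈ (0, t)` and `t + τ ∈ (t, ∞)`. -/
def kelvin (t τ : ℝ) : ℝ := t * τ / (t + τ)

theorem hasDerivAt_kelvin (hτ : t + τ ≠ 0) : HasDerivAt (kelvin t) ((t / (t + τ)) ^ 2) τ := by
  refine (((hasDerivAt_id' τ).const_mul t).div ((hasDerivAt_id' τ).const_add t) hτ).congr_deriv ?_
  field_simp
  ring

theorem strictMonoOn_kelvin (ht : 0 < t) : StrictMonoOn (kelvin t) (Ioi 0) := by
  intro a (ha : 0 < a) b (hb : 0 < b) hab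
  rw [kelvin, kelvin, div_lt_div_iff₀ (by linarith) (by linarith)]
  nlinarith [mul_pos (mul_pos ht ht) (sub_pos.2 hab)]

theorem kelvin_image_Ioi (ht : 0 < t) (hε : 0 < ε) (hεt : ε < t) :
    kelvin t '' Ioi (t * ε / (t - ε)) = Ioo ε t := by
  have htε : 0 < t - ε := by linarith
  ext u
  constructor
  · rintro ⟨τ, hτ, rfl⟩
    rw [mem_Ioi, div_lt_iff₀ htε] at hτ
    have hτ0 : 0 < τ := by nlinarith
    rw [kelvin, mem_Ioo, lt_div_iff₀ (by linarith), div_lt_iff₀ (by linarith)]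
    constructor <;> nlinarith
  · rintro ⟨hεu, hut⟩
    have htu : 0 < t - u := by linarith
    refine ⟨t * u / (t - u), ?_, ?_⟩
    · rw [mem_Ioi, div_lt_div_iff₀ htε htu]
      nlinarith [mul_pos (mul_pos ht ht) (sub_pos.2 hεu)]
    · have := ht.ne'
      rw [kelvin]
      field_simp
      rw [sub_add_cancel]
      field_simp

def pullback (s t τ : ℝ) : ℝ := (t / (t + τ)) ^ 2 * fracKernel s t (-kelvin t τ)

theorem integral_fracKernel_neg_Ioo (ht : 0 < t) (hε : 0 < ε) (hεt : ε < t) :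
    ∫ u in Ioo ε t, fracKernel s t (-u) = ∫ τ in Ioi (t * ε / (t - ε)), pullback s t τ := by
  have hε' : 0 < t * ε / (t - ε) := div_pos (by positivity) (by linarith)
  have hderiv : ∀ τ ∈ Ioi (t * ε / (t - ε)),
      HasDerivWithinAt (kelvin t) ((t / (t + τ)) ^ 2) (Ioi (t * ε / (t - ε))) τ :=
    fun τ hτ => (hasDerivAt_kelvin (by linarith [hε'.trans hτ.out])).hasDerivWithinAt
  rw [← kelvin_image_Ioi ht hε hεt, integral_image_eq_integral_deriv_smul_of_monotoneOn
    measurableSet_Ioi hderiv ((strictMonoOn_kelvin ht).monotoneOn.mono (Ioi_subset_Ioi hε'.le))]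
  rfl

theorem integral_fracKernel_comp_neg (hs0 : 0 < s) (hs1 : s ≤ 1) (ht : 0 < t) (hε : 0 < ε)
    (hεt : ε < t) :
    ∫ u in Ioi ε, fracKernel s t (-u)
      = (∫ τ in Ioi (t * ε / (t - ε)), pullback s t τ) - (2 * s * t ^ s)⁻¹ := by
  have hint := integrableOn_fracKernel_comp_neg (t := t) hs0 hs1 hε
  rw [← Ioc_union_Ioi_eq_Ioi hεt.le, setIntegral_union (Ioc_disjoint_Ioi le_rfl) measurableSet_Ioi
    (hint.mono_set Ioc_subset_Ioi_self) (hint.mono_set (Ioi_subset_Ioi hεt.le)),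
    integral_Ioc_eq_integral_Ioo, integral_fracKernel_neg_Ioo ht hε hεt,
    integral_fracKernel_neg_Ioi_self hs0 ht]
  ring

theorem pullback_eq (ht : 0 < t) (hτ : 0 < τ) :
    pullback s t τ
      = -(t / t ^ s) * ((t + τ) ^ s / (t + τ)) * ((t + τ) ^ s - t ^ s) / τ ^ (1 + 2 * s) := by
  have hP : 0 < t + τ := by linarith
  have hk : 0 < kelvin t τ := by unfold kelvin; positivity
  have hkt : kelvin t τ ≤ t := by
    rw [kelvin, div_le_iff₀ hP]
    nlinarith
  have hsub : t - kelvin t τ = t ^ 2 / (t + τ) := by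
    rw [kelvin]
    field_simp
    ring
  rw [pullback, fracKernel_neg_of_le hk hkt, hsub, kelvin, rpow_one_add_two_mul (by positivity),
    div_rpow (by positivity) hP.le, div_rpow (by positivity) hP.le, mul_rpow ht.le hτ.le,
    ← rpow_pow_comm ht.le, rpow_one_add_two_mul hτ]
  have : t ^ s ≠ 0 := by positivity
  have : τ ^ s ≠ 0 := by positivity
  have : (t + τ) ^ s ≠ 0 := by positivity
  field_simp
  ring

def kernelPrimitive (s t τ : ℝ) : ℝ := ((t + τ) ^ s - t ^ s) ^ 2 / (2 * s * t ^ s * τ ^ (2 * s))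

theorem hasDerivAt_kernelPrimitive (hs : 0 < s) (ht : 0 < t) (hτ : 0 < τ) :
    HasDerivAt (kernelPrimitive s t) (fracKernel s t τ + pullback s t τ) τ := by
  have hP : 0 < t + τ := by linarith
  have hnum := ((((hasDerivAt_id' τ).const_add t).rpow_const (p := s) (Or.inl hP.ne')).sub_const
    (t ^ s)).pow 2
  have hden := (hasDerivAt_rpow_const (p := 2 * s) (Or.inl hτ.ne')).const_mul (2 * s * t ^ s)
  refine (hnum.div hden (by positivity)).congr_deriv ?_
  simp only [Pi.pow_apply]
  rw [fracKernel_of_pos ht.le hτ, pullback_eq ht hτ, rpow_one_add_two_mul hτ, rpow_sub_one hP.ne',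
    rpow_sub_one hτ.ne', mul_comm 2 s, rpow_mul hτ.le, rpow_two]
  have : t ^ s ≠ 0 := by positivity
  have : τ ^ s ≠ 0 := by positivity
  field_simp
  ring

theorem abs_pullback_le (hs0 : 0 < s) (hs1 : s ≤ 1) (ht : 0 < t) (hτ : 0 < τ) :
    |pullback s t τ| ≤ τ ^ (-(1 + s)) := by
  set x := t / (t + τ) with hx
  have hx0 : 0 < x := by positivity
  have hx1 : x ≤ 1 := div_le_one_of_le₀ (by linarith) (by positivity)
  have hk : kelvin t τ = x * τ := by rw [kelvin, hx, div_mul_eq_mul_div]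
  have hK := abs_fracKernel_le hs0 hs1 t (-kelvin t τ)
  rw [abs_neg, hk, abs_of_pos (mul_pos hx0 hτ), mul_rpow hx0.le hτ.le] at hK
  calc |pullback s t τ| = x ^ 2 * |fracKernel s t (-(x * τ))| := by
        rw [pullback, ← hx, hk, abs_mul, abs_of_nonneg (sq_nonneg _)]
    _ ≤ x ^ 2 * (x ^ (-(1 + s)) * τ ^ (-(1 + s))) := by gcongr
    _ = x ^ (1 - s) * τ ^ (-(1 + s)) := by
        rw [← mul_assoc, ← rpow_natCast, ← rpow_add hx0]
        congr 2
        push_cast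
        ring
    _ ≤ τ ^ (-(1 + s)) :=
        mul_le_of_le_one_left (by positivity) (rpow_le_one hx0.le hx1 (by linarith))

@[fun_prop]
theorem measurable_pullback : Measurable (pullback s t) := by
  unfold pullback kelvin
  fun_prop

theorem integrableOn_pullback (hs0 : 0 < s) (hs1 : s ≤ 1) (ht : 0 < t) (hε : 0 < ε) :
    IntegrableOn (pullback s t) (Ioi ε) :=
  integrableOn_Ioi_of_norm_le_rpow (p := -(1 + s)) (by linarith) hε
    measurable_pullback.aestronglyMeasurable fun τ hτ => abs_pullback_le hs0 hs1 ht (hε.trans hτ)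

theorem tendsto_kernelPrimitive_atTop (hs : 0 < s) (ht : 0 < t) :
    Tendsto (kernelPrimitive s t) atTop (𝓝 (2 * s * t ^ s)⁻¹) := by
  have hF : ContinuousAt (fun x : ℝ => ((1 + x) ^ s - x ^ s) ^ 2 / (2 * s * t ^ s)) 0 :=
    ((((continuousAt_const.add continuousAt_id).rpow_const (Or.inl (by norm_num))).sub
      (continuousAt_id.rpow_const (Or.inr hs.le))).pow 2).div_const _
  have hlim := hF.tendsto.comp
    (tendsto_const_nhds.div_atTop tendsto_id : Tendsto (fun τ => t / τ) atTop (𝓝 0))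
  rw [add_zero, one_rpow, zero_rpow hs.ne', sub_zero, one_pow, one_div] at hlim
  refine hlim.congr' ?_
  filter_upwards [eventually_gt_atTop 0] with τ hτ
  have : t ^ s ≠ 0 := by positivity
  have : τ ^ s ≠ 0 := by positivity
  rw [Function.comp_apply, kernelPrimitive, show 1 + t / τ = (t + τ) / τ by field_simp; ring,
    div_rpow (by positivity) hτ.le, div_rpow ht.le hτ.le, mul_comm 2 s, rpow_mul hτ.le, rpow_two]
  field_simp

theorem tendsto_kernelPrimitive_nhdsGT (hs0 : 0 < s) (hs1 : s < 1) (ht : 0 < t) :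
    Tendsto (kernelPrimitive s t) (𝓝[>] 0) (𝓝 0) := by
  have hslope := (hasDerivAt_rpow_const (p := s) (Or.inl ht.ne')).tendsto_slope_zero_right
  have hlim := ((hslope.pow 2).const_mul (2 * s * t ^ s)⁻¹).mul
    (tendsto_rpow_nhdsGT_zero (p := 2 - 2 * s) (by linarith))
  rw [mul_zero] at hlim
  refine hlim.congr' ?_
  filter_upwards [self_mem_nhdsWithin] with ε (hε : 0 < ε)
  have : t ^ s ≠ 0 := by positivity
  have : ε ^ s ≠ 0 := by positivity
  rw [kernelPrimitive, smul_eq_mul, rpow_sub hε, rpow_two, mul_comm 2 s, rpow_mul hε.le, rpow_two]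
  field_simp

theorem integral_fracKernel_add_pullback (hs0 : 0 < s) (hs1 : s ≤ 1) (ht : 0 < t) (hε : 0 < ε) :
    ∫ τ in Ioi ε, (fracKernel s t τ + pullback s t τ)
      = (2 * s * t ^ s)⁻¹ - kernelPrimitive s t ε :=
  integral_Ioi_of_hasDerivAt_of_tendsto'
    (fun _ hτ => hasDerivAt_kernelPrimitive hs0 ht (hε.trans_le hτ))
    ((integrableOn_fracKernel hs0 hs1 hε).add (integrableOn_pullback hs0 hs1 ht hε))
    (tendsto_kernelPrimitive_atTop hs0 ht)

theorem setIntegral_fracKernel_eq (hs0 : 0 < s) (hs1 : s ≤ 1) (ht : 0 < t) (hε : 0 < ε)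
    (hεt : ε < t) :
    ∫ τ in {τ | ε < |τ|}, fracKernel s t τ
      = -kernelPrimitive s t ε - ∫ τ in Ioc ε (t * ε / (t - ε)), pullback s t τ := by
  have hεε' : ε < t * ε / (t - ε) := by
    rw [lt_div_iff₀ (by linarith)]
    nlinarith
  have hP := integrableOn_pullback hs0 hs1 ht hε
  have hsplit : ∫ τ in Ioi ε, pullback s t τ
      = (∫ τ in Ioc ε (t * ε / (t - ε)), pullback s t τ)
        + ∫ τ in Ioi (t * ε / (t - ε)), pullback s t τ := by
    rw [← Ioc_union_Ioi_eq_Ioi hεε'.le, setIntegral_union (Ioc_disjoint_Ioi le_rfl)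
      measurableSet_Ioi (hP.mono_set Ioc_subset_Ioi_self) (hP.mono_set (Ioi_subset_Ioi hεε'.le))]
  have hFTC := integral_fracKernel_add_pullback hs0 hs1 ht hε
  rw [integral_add (integrableOn_fracKernel hs0 hs1 hε) hP] at hFTC
  rw [setIntegral_fracKernel hs0 hs1 hε, integral_fracKernel_comp_neg hs0 hs1 ht hε hεt]
  linarith

theorem tendsto_integral_pullback_Ioc (hs0 : 0 < s) (hs1 : s < 1) (ht : 0 < t) :
    Tendsto (fun ε => ∫ τ in Ioc ε (t * ε / (t - ε)), pullback s t τ) (𝓝[>] 0) (𝓝 0) := by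
  have hlim := (tendsto_rpow_nhdsGT_zero (p := 1 - s) (by linarith)).const_mul (2 / t)
  rw [mul_zero] at hlim
  refine squeeze_zero_norm' ?_ hlim
  filter_upwards [Ioo_mem_nhdsGT (half_pos ht)] with ε ⟨hε, hεt⟩
  have htε : 0 < t - ε := by linarith
  have hεε' : ε ≤ t * ε / (t - ε) := by
    rw [le_div_iff₀ htε]
    nlinarith
  have hbound : ∀ τ ∈ Ioc ε (t * ε / (t - ε)), ‖pullback s t τ‖ ≤ ε ^ (-(1 + s)) :=
    fun τ hτ => (abs_pullback_le hs0 hs1.le ht (hε.trans hτ.1)).trans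
      (rpow_le_rpow_of_nonpos hε hτ.1.le (by linarith))
  calc ‖∫ τ in Ioc ε (t * ε / (t - ε)), pullback s t τ‖
      ≤ ε ^ (-(1 + s)) * volume.real (Ioc ε (t * ε / (t - ε))) :=
        norm_setIntegral_le_of_norm_le_const measure_Ioc_lt_top hbound
    _ = ε ^ (-(1 + s)) * ε ^ 2 / (t - ε) := by
        rw [Real.volume_real_Ioc_of_le hεε']
        field_simp [htε.ne']
        ring
    _ ≤ ε ^ (-(1 + s)) * ε ^ 2 / (t / 2) := by gcongr; linarith
    _ = 2 / t * ε ^ (1 - s) := by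
        rw [← rpow_natCast, ← rpow_add hε]
        field_simp
        ring_nf

end FracHarmonic

/-- `g(η) = (η ∨ 0)^s` is `s`-fractional harmonic on the positive half-line,
in the principal value sense. -/
theorem stmt_4 (s : ℝ) (hs : 1 / 2 < s) (hs1 : s < 1) (t : ℝ) (ht : 0 < t) :
    Tendsto
      (fun ε : ℝ => ∫ τ in {τ : ℝ | ε < |τ|},
        ((fun η : ℝ => if 0 ≤ η then η ^ s else 0) (t + τ)
          - (fun η : ℝ => if 0 ≤ η then η ^ s else 0) t) / |τ| ^ (1 + 2 * s))
      (nhdsWithin 0 (Set.Ioi (0 : ℝ))) (nhds 0) := by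
  open FracHarmonic in
  have hs0 : 0 < s := by linarith
  have hlim := (tendsto_kernelPrimitive_nhdsGT hs0 hs1 ht).neg.sub
    (tendsto_integral_pullback_Ioc hs0 hs1 ht)
  rw [neg_zero, sub_zero] at hlim
  refine hlim.congr' ?_
  filter_upwards [Ioo_mem_nhdsGT ht] with ε ⟨hε, hεt⟩
  exact (setIntegral_fracKernel_eq hs0 hs1.le ht hε hεt).symm
end
end

section
/- For each s ∈ (1/2, 1) there is a constant C_s, depending only on s, such that for every A > 0, r₀ > 0, x₀ ∈ ℝ^N, and every point x and unit vector v, the function P(x) = max(-A(|x-x₀|² - r₀²), 0) satisfies ∫₀^∞ (P(x+ηv) + P(x-ηv) - 2P(x))/η^{1+2s} dη ≥ -C_s A r₀^{2-2s}. -/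
open MeasureTheory Set Real

noncomputable section

/-!
The second difference of the cut paraboloid `P` in a direction `w` is at least
`-2A‖w‖²` (the paraboloid itself has second difference exactly `-2A‖w‖²`, and cutting at `0`
can only help where `P(x) > 0`) and at least `-2P(x) ≥ -2Ar₀²` since `P ≥ 0`. Integrating
`-2A min(η², r₀²) / η^{1+2s}` over `η > 0` gives `-(1/(1-s) + 1/s) A r₀^{2-2s}`: the piece near
`0` converges because `s < 1`, the tail because `s > 0`.
-/

section CutParaboloid

variable {E : Type*} [NormedAddCommGroup E] {A r₀ : ℝ} {x₀ : E}

def cutParaboloid (A r₀ : ℝ) (x₀ z : E) : ℝ := max (-A * (‖z - x₀‖ ^ 2 - r₀ ^ 2)) 0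

lemma cutParaboloid_nonneg (z : E) : 0 ≤ cutParaboloid A r₀ x₀ z := le_max_right _ _

lemma cutParaboloid_le (hA : 0 ≤ A) (z : E) : cutParaboloid A r₀ x₀ z ≤ A * r₀ ^ 2 :=
  max_le (by nlinarith [sq_nonneg ‖z - x₀‖]) (by positivity)

variable [InnerProductSpace ℝ E]

lemma neg_two_mul_sq_le_cutParaboloid_secondDiff (hA : 0 ≤ A) (x w : E) :
    -(2 * A * ‖w‖ ^ 2) ≤ cutParaboloid A r₀ x₀ (x + w) + cutParaboloid A r₀ x₀ (x - w)
      - 2 * cutParaboloid A r₀ x₀ x := by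
  have hparallelogram : ‖x + w - x₀‖ ^ 2 + ‖x - w - x₀‖ ^ 2 = 2 * ‖x - x₀‖ ^ 2 + 2 * ‖w‖ ^ 2 := by
    rw [show x + w - x₀ = (x - x₀) + w by abel, show x - w - x₀ = (x - x₀) - w by abel,
      norm_add_sq_real (x - x₀) w, norm_sub_sq_real (x - x₀) w]
    ring
  unfold cutParaboloid
  have hplus := le_max_left (-A * (‖x + w - x₀‖ ^ 2 - r₀ ^ 2)) 0
  have hminus := le_max_left (-A * (‖x - w - x₀‖ ^ 2 - r₀ ^ 2)) 0
  rcases max_cases (-A * (‖x - x₀‖ ^ 2 - r₀ ^ 2)) 0 with ⟨hx, -⟩ | ⟨hx, -⟩ <;> rw [hx]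
  · nlinarith
  · nlinarith [le_max_right (-A * (‖x + w - x₀‖ ^ 2 - r₀ ^ 2)) 0,
      le_max_right (-A * (‖x - w - x₀‖ ^ 2 - r₀ ^ 2)) 0, sq_nonneg ‖w‖]

lemma neg_two_mul_min_le_cutParaboloid_secondDiff (hA : 0 ≤ A) (x w : E) :
    -(2 * A * min (‖w‖ ^ 2) (r₀ ^ 2)) ≤ cutParaboloid A r₀ x₀ (x + w)
      + cutParaboloid A r₀ x₀ (x - w) - 2 * cutParaboloid A r₀ x₀ x := by
  rw [mul_min_of_nonneg _ _ (by positivity), ← max_neg_neg]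
  refine max_le (neg_two_mul_sq_le_cutParaboloid_secondDiff hA x w) ?_
  linarith [cutParaboloid_le (r₀ := r₀) (x₀ := x₀) hA x,
    cutParaboloid_nonneg (A := A) (r₀ := r₀) (x₀ := x₀) (x + w), cutParaboloid_nonneg (A := A) (r₀ := r₀) (x₀ := x₀) (x - w)]

end CutParaboloid

section Kernel

variable {s r : ℝ}

lemma min_sq_div_rpow_eqOn_Ioc :
    EqOn (fun η : ℝ => min (η ^ 2) (r ^ 2) / η ^ (1 + 2 * s)) (fun η => η ^ (1 - 2 * s))
      (Ioc 0 r) := by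
  intro η ⟨hη, hηr⟩
  simp only
  rw [min_eq_left (by nlinarith), ← rpow_natCast, ← rpow_sub hη]
  congr 1
  push_cast
  ring

lemma min_sq_div_rpow_eqOn_Ioi (hr : 0 < r) :
    EqOn (fun η : ℝ => min (η ^ 2) (r ^ 2) / η ^ (1 + 2 * s)) (fun η => r ^ 2 * η ^ (-(1 + 2 * s)))
      (Ioi r) := by
  intro η (hη : r < η)
  simp only
  rw [min_eq_right (by nlinarith), rpow_neg (hr.trans hη).le, div_eq_mul_inv]

lemma integrableOn_Ioc_min_sq_div_rpow (hs1 : s < 1) :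
    IntegrableOn (fun η : ℝ => min (η ^ 2) (r ^ 2) / η ^ (1 + 2 * s)) (Ioc 0 r) :=
  (intervalIntegral.intervalIntegrable_rpow' (a := 0) (b := r) (by linarith)).1.congr_fun
    min_sq_div_rpow_eqOn_Ioc.symm measurableSet_Ioc

lemma integrableOn_Ioi_min_sq_div_rpow (hs0 : 0 < s) (hr : 0 < r) :
    IntegrableOn (fun η : ℝ => min (η ^ 2) (r ^ 2) / η ^ (1 + 2 * s)) (Ioi r) :=
  IntegrableOn.congr_fun ((integrableOn_Ioi_rpow_of_lt (by linarith) hr).const_mul _)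
    (min_sq_div_rpow_eqOn_Ioi hr).symm measurableSet_Ioi

lemma integrableOn_min_sq_div_rpow (hs0 : 0 < s) (hs1 : s < 1) (hr : 0 < r) :
    IntegrableOn (fun η : ℝ => min (η ^ 2) (r ^ 2) / η ^ (1 + 2 * s)) (Ioi 0) := by
  rw [← Ioc_union_Ioi_eq_Ioi hr.le]
  exact (integrableOn_Ioc_min_sq_div_rpow hs1).union (integrableOn_Ioi_min_sq_div_rpow hs0 hr)

lemma integral_min_sq_div_rpow (hs0 : 0 < s) (hs1 : s < 1) (hr : 0 < r) :
    ∫ η in Ioi 0, min (η ^ 2) (r ^ 2) / η ^ (1 + 2 * s)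
      = (1 / (2 - 2 * s) + 1 / (2 * s)) * r ^ (2 - 2 * s) := by
  have hnear : ∫ η in Ioc 0 r, min (η ^ 2) (r ^ 2) / η ^ (1 + 2 * s)
      = r ^ (2 - 2 * s) / (2 - 2 * s) := by
    rw [setIntegral_congr_fun measurableSet_Ioc min_sq_div_rpow_eqOn_Ioc,
      ← intervalIntegral.integral_of_le hr.le, integral_rpow (Or.inl (by linarith)),
      show 1 - 2 * s + 1 = 2 - 2 * s by ring, zero_rpow (by linarith), sub_zero]
  have htail : ∫ η in Ioi r, min (η ^ 2) (r ^ 2) / η ^ (1 + 2 * s)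
      = r ^ (2 - 2 * s) / (2 * s) := by
    rw [setIntegral_congr_fun measurableSet_Ioi (min_sq_div_rpow_eqOn_Ioi hr), integral_const_mul,
      integral_Ioi_rpow_of_lt (by linarith) hr, show -(1 + 2 * s) + 1 = -(2 * s) by ring,
      neg_div_neg_eq, ← mul_div_assoc, ← rpow_natCast, ← rpow_add hr]
    norm_num [sub_eq_add_neg]
  rw [← Ioc_union_Ioi_eq_Ioi hr.le, setIntegral_union (Ioc_disjoint_Ioi le_rfl) measurableSet_Ioi
    (integrableOn_Ioc_min_sq_div_rpow hs1) (integrableOn_Ioi_min_sq_div_rpow hs0 hr), hnear, htail]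
  ring

end Kernel

/-- The second-difference integrand need not be integrable (at a kink of the cut paraboloid the
second difference is only `O(η)`, and `2s > 1`); its Bochner integral is then the junk value `0`,
which a nonpositive lower bound still undercuts. -/
lemma integral_le_integral_of_le_of_integral_nonpos {α : Type*} [MeasurableSpace α]
    {μ : Measure α} {f g : α → ℝ} (hg : Integrable g μ) (hgf : g ≤ᵐ[μ] f)
    (hg0 : ∫ a, g a ∂μ ≤ 0) : ∫ a, g a ∂μ ≤ ∫ a, f a ∂μ := by
  by_cases hf : Integrable f μ
  · exact integral_mono_ae hg hf hgf
  · rwa [integral_undef hf]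

/-- uniform lower bound `-C_s A r₀^{2-2s}` for the second-difference
integral of the cut paraboloid `P(x) = max(-A(|x-x₀|² - r₀²), 0)`, with `C_s`
depending only on `s`. -/
theorem stmt_5 (s : ℝ) (hs : 1 / 2 < s) (hs1 : s < 1) :
    ∃ Cs : ℝ, 0 < Cs ∧
      ∀ (N : ℕ) (A r₀ : ℝ) (x₀ x v : EuclideanSpace ℝ (Fin N)),
        0 < A → 0 < r₀ → ‖v‖ = 1 →
        -Cs * A * r₀ ^ (2 - 2 * s) ≤
          ∫ η in Set.Ioi (0 : ℝ),
            ((fun z => max (-A * (‖z - x₀‖ ^ 2 - r₀ ^ 2)) 0) (x + η • v)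
              + (fun z => max (-A * (‖z - x₀‖ ^ 2 - r₀ ^ 2)) 0) (x - η • v)
              - 2 * ((fun z => max (-A * (‖z - x₀‖ ^ 2 - r₀ ^ 2)) 0) x)) / η ^ (1 + 2 * s) := by
  have hs0 : 0 < s := by linarith
  have hs1' : 0 < 1 - s := by linarith
  refine ⟨1 / (1 - s) + 1 / s, by positivity, ?_⟩
  intro N A r₀ x₀ x v hA hr hv
  have hkernel := integral_min_sq_div_rpow hs0 hs1 hr
  have hbound : ∀ η ∈ Ioi (0 : ℝ), -(2 * A) * (min (η ^ 2) (r₀ ^ 2) / η ^ (1 + 2 * s)) ≤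
      (cutParaboloid A r₀ x₀ (x + η • v) + cutParaboloid A r₀ x₀ (x - η • v)
        - 2 * cutParaboloid A r₀ x₀ x) / η ^ (1 + 2 * s) := by
    intro η (hη : 0 < η)
    have hw : ‖η • v‖ = η := by rw [norm_smul, hv, mul_one, norm_of_nonneg hη.le]
    rw [← mul_div_assoc, neg_mul]
    gcongr
    simpa only [hw] using neg_two_mul_min_le_cutParaboloid_secondDiff hA.le x (η • v)
  calc -(1 / (1 - s) + 1 / s) * A * r₀ ^ (2 - 2 * s)
      = ∫ η in Ioi 0, -(2 * A) * (min (η ^ 2) (r₀ ^ 2) / η ^ (1 + 2 * s)) := by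
        rw [integral_const_mul, hkernel]
        field_simp
    _ ≤ _ := integral_le_integral_of_le_of_integral_nonpos
        ((integrableOn_min_sq_div_rpow hs0 hs1 hr).const_mul _)
        (ae_restrict_of_forall_mem measurableSet_Ioi hbound)
        (by rw [integral_const_mul, hkernel]
            have : 0 < 2 - 2 * s := by linarith
            exact mul_nonpos_of_nonpos_of_nonneg (by linarith) (by positivity))
end
end

section
/- Let s ∈ (1/2, 1). There exists ε₀ > 0 (depending only on s, a constant M > 0, and C_θ ∈ (0,1)) such that for all ε ∈ (0, ε₀) and all 0 < t < t' ≤ M/C_θ with ε^{-1/s} > 2M/C_θ, the quantity ∫_{t'}^{ε^{-1/s}-t} (1 - ε(t+η)^s)/η^{1+2s} dη - ∫_{ε^{-1/s}-t}^∞ (ε(t+η)^s - 1)/η^{1+2s} dη is bounded below by (1/(4s))(C_θ/M)^{2s} - ((2^{2s}+2^{2s-1})/s)ε², and hence is nonnegative. -/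
open MeasureTheory Metric Set Real

noncomputable section

/-!
For `t ≤ η` we have `(t + η) ^ s ≤ 2 ^ s * η ^ s`, so the integrand over `(t', ε ^ (-1/s) - t]` is
bounded below and the one over the tail above by combinations of `η ^ (-(1 + 2s))` and
`2 ^ s * ε * η ^ (-(1 + s))`, which integrate in closed form. Writing `u = t' ^ (-s)`,
`w = (ε ^ (-1/s) - t) ^ (-s)` and `B = 2 ^ s * ε`, the difference is at least
`(u² / 2 - w² / 2 - B u) / s`. Since `ε ^ (-1/s) - t > ε ^ (-1/s) / 2` we get `w ≤ B`, while
`u ≥ v := (C_θ / M) ^ s ≥ 4B` by the choice `ε₀ = v / (4 * 2 ^ s)`; hence the bound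
`(v² / 4 - 3B² / 2) / s ≥ 0`.
-/

lemma integral_Ioc_rpow_neg_one_sub {a b p : ℝ} (ha : 0 < a) (hab : a ≤ b) (hp : p ≠ 0) :
    ∫ η in Ioc a b, η ^ (-(1 + p)) = (a ^ (-p) - b ^ (-p)) / p := by
  have hr : -(1 + p) ≠ -1 := fun h ↦ hp (by linarith)
  rw [← intervalIntegral.integral_of_le hab,
    integral_rpow (Or.inr ⟨hr, notMem_uIcc_of_lt ha (ha.trans_le hab)⟩),
    show -(1 + p) + 1 = -p by ring]
  field_simp
  ring

lemma integral_Ioi_rpow_neg_one_sub {a p : ℝ} (ha : 0 < a) (hp : 0 < p) :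
    ∫ η in Ioi a, η ^ (-(1 + p)) = a ^ (-p) / p := by
  rw [integral_Ioi_rpow_of_lt (by linarith) ha, show -(1 + p) + 1 = -p by ring, neg_div_neg_eq]

lemma rpow_two_mul {x : ℝ} (hx : 0 ≤ x) (y : ℝ) : x ^ (2 * y) = (x ^ y) ^ 2 := by
  rw [mul_comm]
  exact_mod_cast rpow_mul_natCast hx y 2

section

variable {s ε t : ℝ}

lemma mul_rpow_add_div_rpow_le {η : ℝ} (hs : 0 ≤ s) (hε : 0 ≤ ε) (ht : 0 ≤ t) (hη : 0 < η)
    (htη : t ≤ η) :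
    ε * (t + η) ^ s / η ^ (1 + 2 * s) ≤ 2 ^ s * ε * η ^ (-(1 + s)) := by
  have h2η : (t + η) ^ s ≤ 2 ^ s * η ^ s := by
    rw [← mul_rpow zero_le_two hη.le]
    exact rpow_le_rpow (by linarith) (by linarith) hs
  calc ε * (t + η) ^ s / η ^ (1 + 2 * s) ≤ ε * (2 ^ s * η ^ s) / η ^ (1 + 2 * s) := by
        gcongr
    _ = 2 ^ s * ε * η ^ (-(1 + s)) := by
        rw [mul_left_comm, ← mul_assoc, mul_div_assoc, ← rpow_sub hη]
        ring_nf

lemma integrableOn_Ioi_mul_rpow_add_div_rpow {a : ℝ} (hs : 0 < s) (hε : 0 ≤ ε) (ht : 0 ≤ t)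
    (ha : 0 < a) (hta : t ≤ a) :
    IntegrableOn (fun η ↦ ε * (t + η) ^ s / η ^ (1 + 2 * s)) (Ioi a) := by
  have hk : IntegrableOn (fun η ↦ η ^ (-(1 + s))) (Ioi a) :=
    integrableOn_Ioi_rpow_of_lt (by linarith) ha
  refine Integrable.mono' (hk.const_mul (2 ^ s * ε)) ?_ ?_
  · refine ContinuousOn.aestronglyMeasurable ?_ measurableSet_Ioi
    refine ContinuousOn.div ?_ ?_ fun η hη ↦ (rpow_pos_of_pos (ha.trans hη) _).ne'
    · exact (continuous_const.mul
        ((continuous_const.add continuous_id).rpow_const fun _ ↦ Or.inr hs.le)).continuousOn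
    · exact (continuous_id.rpow_const fun _ ↦ Or.inr (by positivity)).continuousOn
  · filter_upwards [ae_restrict_mem measurableSet_Ioi] with η hη
    have hη0 : 0 < η := ha.trans hη
    rw [norm_of_nonneg (by positivity)]
    exact mul_rpow_add_div_rpow_le hs.le hε ht hη0 (hta.trans hη.le)

lemma le_integral_Ioc_gain {a b : ℝ} (hs : 0 < s) (hε : 0 ≤ ε) (ht : 0 ≤ t) (ha : 0 < a)
    (hta : t ≤ a) (hab : a ≤ b) :
    (a ^ (-(2 * s)) - b ^ (-(2 * s))) / (2 * s) - 2 ^ s * ε * ((a ^ (-s) - b ^ (-s)) / s)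
      ≤ ∫ η in Ioc a b, (1 - ε * (t + η) ^ s) / η ^ (1 + 2 * s) := by
  have hh : IntegrableOn (fun η ↦ ε * (t + η) ^ s / η ^ (1 + 2 * s)) (Ioc a b) :=
    (integrableOn_Ioi_mul_rpow_add_div_rpow hs hε ht ha hta).mono_set Ioc_subset_Ioi_self
  have hk₁ : IntegrableOn (fun η ↦ η ^ (-(1 + 2 * s))) (Ioc a b) :=
    (integrableOn_Ioi_rpow_of_lt (by linarith) ha).mono_set Ioc_subset_Ioi_self
  have hk₂ : IntegrableOn (fun η ↦ η ^ (-(1 + s))) (Ioc a b) :=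
    (integrableOn_Ioi_rpow_of_lt (by linarith) ha).mono_set Ioc_subset_Ioi_self
  have hsplit : EqOn (fun η ↦ (1 - ε * (t + η) ^ s) / η ^ (1 + 2 * s))
      (fun η ↦ η ^ (-(1 + 2 * s)) - ε * (t + η) ^ s / η ^ (1 + 2 * s)) (Ioc a b) :=
    fun η hη ↦ by simp only [sub_div, rpow_neg (ha.trans hη.1).le, one_div]
  have hloss : ∫ η in Ioc a b, ε * (t + η) ^ s / η ^ (1 + 2 * s)
      ≤ 2 ^ s * ε * ((a ^ (-s) - b ^ (-s)) / s) := by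
    rw [← integral_Ioc_rpow_neg_one_sub ha hab hs.ne', ← integral_const_mul]
    exact setIntegral_mono_on hh (hk₂.const_mul _) measurableSet_Ioc fun η hη ↦
      mul_rpow_add_div_rpow_le hs.le hε ht (ha.trans hη.1) (hta.trans hη.1.le)
  rw [setIntegral_congr_fun measurableSet_Ioc hsplit, integral_sub hk₁ hh,
    integral_Ioc_rpow_neg_one_sub ha hab (by positivity)]
  linarith

lemma integral_Ioi_loss_le {a : ℝ} (hs : 0 < s) (hε : 0 ≤ ε) (ht : 0 ≤ t) (ha : 0 < a)
    (hta : t ≤ a) :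
    ∫ η in Ioi a, (ε * (t + η) ^ s - 1) / η ^ (1 + 2 * s) ≤ 2 ^ s * ε * (a ^ (-s) / s) := by
  have hk₁ : IntegrableOn (fun η ↦ η ^ (-(1 + 2 * s))) (Ioi a) :=
    integrableOn_Ioi_rpow_of_lt (by linarith) ha
  have hk₂ : IntegrableOn (fun η ↦ η ^ (-(1 + s))) (Ioi a) :=
    integrableOn_Ioi_rpow_of_lt (by linarith) ha
  have hf : IntegrableOn (fun η ↦ (ε * (t + η) ^ s - 1) / η ^ (1 + 2 * s)) (Ioi a) :=
    ((integrableOn_Ioi_mul_rpow_add_div_rpow hs hε ht ha hta).sub hk₁).congr_fun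
      (fun η hη ↦ by simp only [Pi.sub_apply, sub_div, rpow_neg (ha.trans hη).le, one_div])
      measurableSet_Ioi
  rw [← integral_Ioi_rpow_neg_one_sub ha hs, ← integral_const_mul]
  refine setIntegral_mono_on hf (hk₂.const_mul _) measurableSet_Ioi fun η hη ↦ ?_
  calc (ε * (t + η) ^ s - 1) / η ^ (1 + 2 * s) ≤ ε * (t + η) ^ s / η ^ (1 + 2 * s) :=
        div_le_div_of_nonneg_right (by linarith) (rpow_nonneg (ha.trans hη).le _)
    _ ≤ 2 ^ s * ε * η ^ (-(1 + s)) :=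
        mul_rpow_add_div_rpow_le hs.le hε ht (ha.trans hη) (hta.trans hη.le)

lemma le_integral_gain_sub_integral_loss {a b v : ℝ} (hs : 0 < s) (hε : 0 ≤ ε) (ht : 0 ≤ t)
    (ha : 0 < a) (hta : t ≤ a) (hab : a ≤ b) (hv : 0 ≤ v) (hva : v ≤ a ^ (-s))
    (hb : b ^ (-s) ≤ 2 ^ s * ε) (hεv : 4 * (2 ^ s * ε) ≤ v) :
    (v ^ 2 / 4 - 3 / 2 * (2 ^ s * ε) ^ 2) / s
      ≤ (∫ η in Ioc a b, (1 - ε * (t + η) ^ s) / η ^ (1 + 2 * s))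
        - ∫ η in Ioi b, (ε * (t + η) ^ s - 1) / η ^ (1 + 2 * s) := by
  have hgain := le_integral_Ioc_gain hs hε ht ha hta hab
  have hloss := integral_Ioi_loss_le hs hε ht (ha.trans_le hab) (hta.trans hab)
  rw [neg_mul_eq_mul_neg, rpow_two_mul ha.le, rpow_two_mul (ha.trans_le hab).le] at hgain
  set u := a ^ (-s)
  set w := b ^ (-s)
  set B := 2 ^ s * ε
  have hw : 0 ≤ w := rpow_nonneg (ha.trans_le hab).le _
  have hpoly : v ^ 2 / 4 - 3 / 2 * B ^ 2 ≤ u ^ 2 / 2 - w ^ 2 / 2 - B * u := by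
    nlinarith [mul_le_mul hva hva hv (hv.trans hva), mul_le_mul hb hb hw (hw.trans hb)]
  calc (v ^ 2 / 4 - 3 / 2 * B ^ 2) / s ≤ (u ^ 2 / 2 - w ^ 2 / 2 - B * u) / s := by gcongr
    _ = (u ^ 2 - w ^ 2) / (2 * s) - B * ((u - w) / s) - B * (w / s) := by
        field_simp
        ring
    _ ≤ _ := by linarith

end

lemma rpow_neg_le_two_rpow_mul {ε s b : ℝ} (hε : 0 < ε) (hs : 0 < s) (hb : ε ^ (-s⁻¹) / 2 ≤ b) :
    b ^ (-s) ≤ 2 ^ s * ε := by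
  have hR : 0 < ε ^ (-s⁻¹) := rpow_pos_of_pos hε _
  calc b ^ (-s) ≤ (ε ^ (-s⁻¹) / 2) ^ (-s) :=
        rpow_le_rpow_of_nonpos (by positivity) hb (by linarith)
    _ = 2 ^ s * ε := by
        rw [div_rpow hR.le zero_le_two, ← rpow_mul hε.le, neg_mul_neg, inv_mul_cancel₀ hs.ne',
          rpow_one, rpow_neg zero_le_two, div_inv_eq_mul, mul_comm]

theorem stmt_15_general (s M Cθ : ℝ) (hs : 1 / 2 < s) (hM : 0 < M)
    (hCθ0 : 0 < Cθ) :
    ∃ ε₀ > (0 : ℝ), ∀ ε : ℝ, 0 < ε → ε < ε₀ → ∀ t t' : ℝ,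
      0 < t → t < t' → t' ≤ M / Cθ → 2 * M / Cθ < ε ^ (-s⁻¹) →
      (1 / (4 * s)) * (Cθ / M) ^ (2 * s) - ((2 ^ (2 * s) + 2 ^ (2 * s - 1)) / s) * ε ^ 2
        ≤ (∫ η in Set.Ioc t' (ε ^ (-s⁻¹) - t), (1 - ε * (t + η) ^ s) / η ^ (1 + 2 * s))
          - (∫ η in Set.Ioi (ε ^ (-s⁻¹) - t), (ε * (t + η) ^ s - 1) / η ^ (1 + 2 * s)) ∧
      0 ≤ (∫ η in Set.Ioc t' (ε ^ (-s⁻¹) - t), (1 - ε * (t + η) ^ s) / η ^ (1 + 2 * s))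
          - (∫ η in Set.Ioi (ε ^ (-s⁻¹) - t), (ε * (t + η) ^ s - 1) / η ^ (1 + 2 * s)) := by
  have hs0 : 0 < s := by linarith
  set v := (Cθ / M) ^ s
  have hv : 0 < v := by positivity
  refine ⟨v / (4 * 2 ^ s), by positivity, fun ε hε hεlt t t' ht htt' ht'M hR ↦ ?_⟩
  rw [mul_div_assoc] at hR
  have hva : v ≤ t' ^ (-s) := by
    rw [show v = (M / Cθ) ^ (-s) by
      rw [rpow_neg (by positivity), ← inv_rpow (by positivity), inv_div]]
    exact rpow_le_rpow_of_nonpos (ht.trans htt') ht'M (by linarith)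
  have hb := rpow_neg_le_two_rpow_mul hε hs0 (b := ε ^ (-s⁻¹) - t) (by linarith)
  have hεv : 4 * (2 ^ s * ε) ≤ v := by
    rw [lt_div_iff₀ (by positivity)] at hεlt
    linarith
  have hlhs : (1 / (4 * s)) * (Cθ / M) ^ (2 * s) - ((2 ^ (2 * s) + 2 ^ (2 * s - 1)) / s) * ε ^ 2
      = (v ^ 2 / 4 - 3 / 2 * (2 ^ s * ε) ^ 2) / s := by
    rw [rpow_sub two_pos, rpow_one, rpow_two_mul (by positivity), rpow_two_mul zero_le_two]
    field_simp
    ring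
  have hmain := le_integral_gain_sub_integral_loss hs0 hε.le ht.le (ht.trans htt') htt'.le
    (by linarith) hv.le hva hb hεv
  have hnonneg : 0 ≤ v ^ 2 / 4 - 3 / 2 * (2 ^ s * ε) ^ 2 := by
    nlinarith [mul_le_mul hεv hεv (by positivity) hv.le]
  rw [hlhs]
  exact ⟨hmain, (div_nonneg hnonneg hs0.le).trans hmain⟩

/-- for `ε` small (depending only on `s`, `M`, `C_θ`), the combined
gain/loss quantity is bounded below by `(1/(4s))(C_θ/M)^{2s} - ((2^{2s}+2^{2s-1})/s)ε²`
and hence is nonnegative. -/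
theorem stmt_15 (s M Cθ : ℝ) (hs : 1 / 2 < s) (hs1 : s < 1) (hM : 0 < M)
    (hCθ0 : 0 < Cθ) (hCθ1 : Cθ < 1) :
    ∃ ε₀ > (0 : ℝ), ∀ ε : ℝ, 0 < ε → ε < ε₀ → ∀ t t' : ℝ,
      0 < t → t < t' → t' ≤ M / Cθ → 2 * M / Cθ < ε ^ (-s⁻¹) →
      (1 / (4 * s)) * (Cθ / M) ^ (2 * s) - ((2 ^ (2 * s) + 2 ^ (2 * s - 1)) / s) * ε ^ 2
        ≤ (∫ η in Set.Ioc t' (ε ^ (-s⁻¹) - t), (1 - ε * (t + η) ^ s) / η ^ (1 + 2 * s))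
          - (∫ η in Set.Ioi (ε ^ (-s⁻¹) - t), (ε * (t + η) ^ s - 1) / η ^ (1 + 2 * s)) ∧
      0 ≤ (∫ η in Set.Ioc t' (ε ^ (-s⁻¹) - t), (1 - ε * (t + η) ^ s) / η ^ (1 + 2 * s))
          - (∫ η in Set.Ioi (ε ^ (-s⁻¹) - t), (ε * (t + η) ^ s - 1) / η ^ (1 + 2 * s)) :=
  stmt_15_general s M Cθ hs hM hCθ0
end
end

section
/- Let θ ∈ (0, π/2) and C⁺ = {x ∈ ℝ^N \ {0} : cos θ < x·e₁/|x| ≤ 1}, C⁻ = -C⁺. There exists A_θ ≥ 1, depending only on θ, such that for every x, z ∈ ℝ^N there is w ∈ ℝ^N with x - w ∈ C⁺ ∪ {0}, z - w ∈ C⁺ ∪ {0}, and |x - w| + |z - w| ≤ A_θ |x - z|. -/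
open Metric Real

/-!
Take `w` on the axis through the midpoint of `x` and `z`, at distance `‖x - z‖ / (1 - cos θ)`
below it. Then `x - w` and `z - w` lie in the ball of radius `‖x - z‖ / 2` around a point of
the axis `e₁` so far out that the whole ball sits inside the cone, which gives the cone
condition and `A_θ = 1 + 2 / (1 - cos θ)`.
-/

section Cone

variable {E : Type*} [NormedAddCommGroup E] [InnerProductSpace ℝ E] {e : E}

theorem lt_inner_div_norm_of_mem_closedBall (he : ‖e‖ = 1) {c s r : ℝ} {v : E}
    (hc : 0 ≤ c) (hs : 0 ≤ s) (h : c * (s + r) < s - r) (hv : v ∈ closedBall (s • e) r) :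
    v ≠ 0 ∧ c < inner ℝ v e / ‖v‖ := by
  have hnorm : ‖v‖ ≤ s + r := by
    simpa [norm_smul, he, abs_of_nonneg hs] using norm_le_of_mem_closedBall hv
  have hinner : s - r ≤ inner ℝ v e := by
    have hp : |inner ℝ (v - s • e) e| ≤ r := by
      refine (abs_real_inner_le_norm _ _).trans ?_
      rw [he, mul_one, ← dist_eq_norm]
      exact hv
    rw [inner_sub_left, real_inner_smul_left, real_inner_self_eq_norm_sq, he] at hp
    linarith [(abs_le.1 hp).1]
  have hlt : c * ‖v‖ < inner ℝ v e :=
    calc c * ‖v‖ ≤ c * (s + r) := mul_le_mul_of_nonneg_left hnorm hc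
      _ < s - r := h
      _ ≤ inner ℝ v e := hinner
  have hpos : 0 < ‖v‖ := by
    have : inner ℝ v e ≤ ‖v‖ := by simpa [he] using real_inner_le_norm v e
    nlinarith [norm_nonneg v]
  exact ⟨norm_pos_iff.1 hpos, (lt_div_iff₀ hpos).2 hlt⟩

theorem exists_common_apex (he : ‖e‖ = 1) {c : ℝ} (hc0 : 0 ≤ c) (hc1 : c < 1) (x z : E) :
    ∃ w : E,
      (x - w = 0 ∨ (x - w ≠ 0 ∧ c < inner ℝ (x - w) e / ‖x - w‖)) ∧
      (z - w = 0 ∨ (z - w ≠ 0 ∧ c < inner ℝ (z - w) e / ‖z - w‖)) ∧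
      ‖x - w‖ + ‖z - w‖ ≤ (1 + 2 / (1 - c)) * ‖x - z‖ := by
  rcases eq_or_ne x z with rfl | hxz
  · exact ⟨x, by simp⟩
  set K := 2 / (1 - c)
  set r := ‖x - z‖ / 2
  have hr : 0 < r := by positivity [sub_ne_zero.2 hxz]
  have hcone : c * (K * r + r) < K * r - r := by
    have : K * (1 - c) = 2 := div_mul_cancel₀ _ (sub_pos.2 hc1).ne'
    nlinarith
  set w := (1 / 2 : ℝ) • (x + z) - (K * r) • e
  have hx : x - w ∈ closedBall ((K * r) • e) r := by
    rw [mem_closedBall_iff_norm, show x - w - (K * r) • e = (1 / 2 : ℝ) • (x - z) by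
      simp only [w]; module]
    simp [norm_smul, r, div_eq_inv_mul]
  have hz : z - w ∈ closedBall ((K * r) • e) r := by
    rw [mem_closedBall_iff_norm, show z - w - (K * r) • e = (1 / 2 : ℝ) • (z - x) by
      simp only [w]; module]
    simp [norm_smul, r, div_eq_inv_mul, norm_sub_rev]
  refine ⟨w, .inr (lt_inner_div_norm_of_mem_closedBall he hc0 (by positivity) hcone hx),
    .inr (lt_inner_div_norm_of_mem_closedBall he hc0 (by positivity) hcone hz), ?_⟩
  have hbound := add_le_add (norm_le_of_mem_closedBall hx) (norm_le_of_mem_closedBall hz)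
  rw [norm_smul, he, Real.norm_of_nonneg (by positivity)] at hbound
  rw [show ‖x - z‖ = 2 * r by ring]
  linarith

end Cone

/-- any two points `x, z` admit a common cone-apex `w` with
`x - w, z - w ∈ C⁺ ∪ {0}` and `|x-w| + |z-w| ≤ A_θ |x-z|`, where `A_θ ≥ 1`
depends only on the cone opening `θ`. -/
theorem stmt_17 {N : ℕ} (hN : 0 < N) (θ : ℝ) (hθ0 : 0 < θ) (hθ : θ < π / 2) :
    ∃ Aθ : ℝ, 1 ≤ Aθ ∧
      ∀ x z : EuclideanSpace ℝ (Fin N), ∃ w : EuclideanSpace ℝ (Fin N),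
        (x - w = 0 ∨ (x - w ≠ 0 ∧ Real.cos θ <
          (inner ℝ (x - w) (EuclideanSpace.single (⟨0, hN⟩ : Fin N) (1 : ℝ)) : ℝ) / ‖x - w‖)) ∧
        (z - w = 0 ∨ (z - w ≠ 0 ∧ Real.cos θ <
          (inner ℝ (z - w) (EuclideanSpace.single (⟨0, hN⟩ : Fin N) (1 : ℝ)) : ℝ) / ‖z - w‖)) ∧
        ‖x - w‖ + ‖z - w‖ ≤ Aθ * ‖x - z‖ := by
  have hc0 : 0 ≤ cos θ := cos_nonneg_of_mem_Icc ⟨by linarith [pi_pos], hθ.le⟩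
  have hc1 : cos θ < 1 := by
    simpa using cos_lt_cos_of_nonneg_of_le_pi_div_two le_rfl hθ.le hθ0
  have he : ‖EuclideanSpace.single (⟨0, hN⟩ : Fin N) (1 : ℝ)‖ = 1 := by simp
  refine ⟨1 + 2 / (1 - cos θ), ?_, exists_common_apex he hc0 hc1⟩
  have := sub_pos.2 hc1
  simp only [le_add_iff_nonneg_right]
  positivity
end
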